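/- arXiv:1107.1435 — 11 statements merged into one kernel-verified Lean document; each statement's English description precedes it below -/
import Mathlib

section
/- If X is a weakly initially λ-compact topological space and 2^μ ≤ λ, then X is D-pseudocompact for every ultrafilter D over a set of cardinality at most μ. -/
/-!
Suppose no point of `X` is a `D`-limit point of the nonempty open sets `O i`. Every point then has
a neighbourhood missing `O i` for `D`-many `i`, so the open sets `avoidingSet O A`, `A ∈ D`, cover
`X`, and there are at most `2 ^ |I| ≤ λ` of them. As `avoidingSet O` is antitone and `D` is closed
under finite intersections, a finite dense subfamily yields a single dense `avoidingSet O A` with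
`A ∈ D`; but it misses the nonempty open set `O i` for any `i ∈ A`.
-/

open Cardinal Set

universe u v

/-- `x` is a `D`-limit point of the family of sets `O`. -/
def DLimitSets {X : Type u} {I : Type v} [TopologicalSpace X]
    (D : Ultrafilter I) (O : I → Set X) (x : X) : Prop :=
  ∀ U ∈ nhds x, {i | (U ∩ O i).Nonempty} ∈ D

/-- `X` is `D`-pseudocompact. -/
def DPseudocompact (X : Type u) {I : Type v} [TopologicalSpace X]
    (D : Ultrafilter I) : Prop :=
  ∀ O : I → Set X, (∀ i, IsOpen (O i)) → (∀ i, (O i).Nonempty) →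
    ∃ x : X, DLimitSets D O x

/-- Every open cover of cardinality at most `lam` has a finite subfamily with dense union. -/
def WeaklyInitiallyCompact (X : Type u) [TopologicalSpace X] (lam : Cardinal.{u}) : Prop :=
  ∀ 𝒰 : Set (Set X), (∀ U ∈ 𝒰, IsOpen U) → ⋃₀ 𝒰 = Set.univ →
    Cardinal.mk 𝒰 ≤ lam →
    ∃ t : Finset (Set X), ↑t ⊆ 𝒰 ∧ Dense (⋃₀ (t : Set (Set X)))

/-- A regular ultrafilter over `I` (regular of degree `|I|`): there is an `I`-indexed
family of members of `D` every infinite subfamily of which has empty intersection. -/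
def RegularUltrafilter {I : Type v} (D : Ultrafilter I) : Prop :=
  ∃ Z : I → Set I, (∀ i, Z i ∈ D) ∧
    ∀ S : Set I, S.Infinite → ⋂ i ∈ S, Z i = ∅

section

variable {X : Type u} {I : Type v} [TopologicalSpace X]

def avoidingSet (O : I → Set X) (A : Set I) : Set X :=
  (closure (⋃ i ∈ A, O i))ᶜ

theorem isOpen_avoidingSet (O : I → Set X) (A : Set I) : IsOpen (avoidingSet O A) :=
  isClosed_closure.isOpen_compl

theorem avoidingSet_antitone (O : I → Set X) : Antitone (avoidingSet O) := fun _ _ hAB =>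
  compl_subset_compl.mpr (closure_mono (biUnion_subset_biUnion_left hAB))

theorem not_dense_avoidingSet {O : I → Set X} {A : Set I} {i : I} (hi : i ∈ A)
    (hO : IsOpen (O i)) (hne : (O i).Nonempty) : ¬Dense (avoidingSet O A) := fun hdense => by
  obtain ⟨x, hxO, hxW⟩ := hdense.inter_open_nonempty (O i) hO hne
  exact hxW (subset_closure (mem_biUnion hi hxO))

theorem mem_avoidingSet_of_not_dLimitSets {D : Ultrafilter I} {O : I → Set X} {x : X}
    (hx : ¬DLimitSets D O x) : ∃ A ∈ D, x ∈ avoidingSet O A := by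
  simp only [DLimitSets, not_forall] at hx
  obtain ⟨U, hU, hUD⟩ := hx
  refine ⟨{i | (U ∩ O i).Nonempty}ᶜ, Ultrafilter.compl_mem_iff_notMem.mpr hUD, ?_⟩
  rw [avoidingSet, mem_compl_iff, mem_closure_iff_nhds, not_forall]
  refine ⟨U, ?_⟩
  simp only [hU, inter_iUnion₂, nonempty_iUnion, true_implies, not_exists]
  exact fun i hi => hi

theorem sUnion_avoidingSet_eq_univ {D : Ultrafilter I} {O : I → Set X}
    (hO : ∀ x, ¬DLimitSets D O x) : ⋃₀ (avoidingSet O '' {A | A ∈ D}) = Set.univ :=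
  eq_univ_of_forall fun x => by
    obtain ⟨A, hA, hxA⟩ := mem_avoidingSet_of_not_dLimitSets (hO x)
    exact ⟨avoidingSet O A, mem_image_of_mem _ hA, hxA⟩

end

theorem Filter.exists_mem_sUnion_subset_of_finite_subset_image {α : Type u} {β : Type v}
    {f : Filter β} {g : Set β → Set α} (hg : Antitone g) {𝒱 : Set (Set α)} (h𝒱 : 𝒱.Finite)
    (hsub : 𝒱 ⊆ g '' {A | A ∈ f}) : ∃ A ∈ f, ⋃₀ 𝒱 ⊆ g A := by
  choose! a haf hag using fun V (hV : V ∈ 𝒱) => hsub hV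
  refine ⟨⋂ V ∈ 𝒱, a V, (Filter.biInter_mem h𝒱).mpr haf, sUnion_subset fun V hV => ?_⟩
  rw [← hag V hV]
  exact hg (biInter_subset_of_mem hV)

theorem weaklyInitiallyCompact_implies_dPseudocompact_general
    {X : Type u} [TopologicalSpace X] (lam mu : Cardinal.{u})
    (hX : WeaklyInitiallyCompact X lam) (h2 : 2 ^ mu ≤ lam)
    (I : Type u) (hI : Cardinal.mk I ≤ mu) (D : Ultrafilter I) :
    DPseudocompact X D := by
  intro O hO hne
  by_contra! hno
  have hcard : #(avoidingSet O '' {A | A ∈ D}) ≤ lam :=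
    calc #(avoidingSet O '' {A | A ∈ D}) ≤ #(Set I) := mk_image_le.trans (mk_set_le _)
      _ = 2 ^ #I := mk_set
      _ ≤ 2 ^ mu := power_le_power_left two_ne_zero hI
      _ ≤ lam := h2
  obtain ⟨t, hsub, hdense⟩ := hX _ (by rintro _ ⟨A, -, rfl⟩; exact isOpen_avoidingSet O A)
    (sUnion_avoidingSet_eq_univ hno) hcard
  obtain ⟨A, hA, hsubA⟩ := Filter.exists_mem_sUnion_subset_of_finite_subset_image
    (avoidingSet_antitone O) t.finite_toSet hsub
  obtain ⟨i, hi⟩ := D.nonempty_of_mem hA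
  exact not_dense_avoidingSet hi (hO i) (hne i) (hdense.mono hsubA)

theorem weaklyInitiallyCompact_implies_dPseudocompact
    {X : Type u} [TopologicalSpace X] (lam mu : Cardinal.{u})
    (hlam : Cardinal.aleph0 ≤ lam) (hmu : Cardinal.aleph0 ≤ mu)
    (hX : WeaklyInitiallyCompact X lam) (h2 : 2 ^ mu ≤ lam)
    (I : Type u) (hI : Cardinal.mk I ≤ mu) (D : Ultrafilter I) :
    DPseudocompact X D :=
  weaklyInitiallyCompact_implies_dPseudocompact_general lam mu hX h2 I hI D
end

section
/- If a topological space X is D-pseudocompact for some regular ultrafilter D over an infinite cardinal μ, then X is weakly initially μ-compact. -/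
open Cardinal Set

universe u v

theorem dPseudocompact_regular_implies_weaklyInitiallyCompact
    {X : Type u} [TopologicalSpace X] (I : Type u) [Infinite I]
    (D : Ultrafilter I) (hreg : RegularUltrafilter D)
    (hX : DPseudocompact X D) :
    WeaklyInitiallyCompact X (Cardinal.mk I) := by
  classical
  intro 𝒰 hopen hcov hcard
  by_contra hcon
  push_neg at hcon
  by_cases hXe : IsEmpty X
  · exact hcon ∅ (by simp) (fun x => hXe.elim x)
  rw [not_isEmpty_iff] at hXe
  obtain ⟨x₀⟩ := hXe
  have hUne : 𝒰.Nonempty := by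
    rcases Set.mem_sUnion.mp (hcov ▸ Set.mem_univ x₀) with ⟨U, hU, _⟩
    exact ⟨U, hU⟩
  have : Nonempty 𝒰 := hUne.to_subtype
  obtain ⟨g⟩ := Cardinal.le_def _ _ |>.mp hcard
  set f : I → 𝒰 := Function.invFun g with hfdef
  have hf : Function.Surjective f := Function.invFun_surjective g.injective
  obtain ⟨Z, hZD, hZ⟩ := hreg
  have hfin : ∀ j : I, {i | j ∈ Z i}.Finite := by
    intro j
    by_contra h
    have heq := hZ _ h
    have hj : j ∈ ⋂ i ∈ {i | j ∈ Z i}, Z i := Set.mem_biInter fun i hi => hi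
    rw [heq] at hj
    exact hj
  set O : I → Set X := fun j =>
    (closure (⋃ i ∈ (hfin j).toFinset, (f i : Set X)))ᶜ with hOdef
  have hOopen : ∀ j, IsOpen (O j) := fun j => isClosed_closure.isOpen_compl
  have hOne : ∀ j, (O j).Nonempty := by
    intro j
    set t : Finset (Set X) := (hfin j).toFinset.image (fun i => (f i : Set X)) with ht
    have hts : ↑t ⊆ 𝒰 := by
      intro U hU
      simp only [ht, Finset.coe_image, Set.mem_image] at hU
      obtain ⟨i, _, rfl⟩ := hU
      exact (f i).2
    have hnd := hcon t hts
    rw [dense_iff_closure_eq] at hnd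
    have hsub : ⋃₀ (t : Set (Set X)) = ⋃ i ∈ (hfin j).toFinset, (f i : Set X) := by
      ext y
      simp only [ht, Set.mem_sUnion, Finset.coe_image, Set.mem_image, Set.mem_iUnion,
        Finset.mem_coe, Finset.mem_image, Set.Finite.mem_toFinset, Set.mem_setOf_eq,
        exists_prop]
      constructor
      · rintro ⟨U, ⟨i, hi, rfl⟩, hy⟩
        exact ⟨i, hi, hy⟩
      · rintro ⟨i, hi, hy⟩
        exact ⟨f i, ⟨i, hi, rfl⟩, hy⟩
    rw [hsub] at hnd
    exact Set.nonempty_compl.mpr hnd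
  obtain ⟨x, hx⟩ := hX O hOopen hOne
  rcases Set.mem_sUnion.mp (hcov ▸ Set.mem_univ x) with ⟨U, hU, hxU⟩
  obtain ⟨i₀, hi₀⟩ := hf ⟨U, hU⟩
  have hA : {j | (U ∩ O j).Nonempty} ∈ D := hx U ((hopen U hU).mem_nhds hxU)
  obtain ⟨j, hjA, hjZ⟩ := Filter.nonempty_of_mem (Filter.inter_mem hA (hZD i₀))
  obtain ⟨y, hyU, hyO⟩ := hjA
  apply hyO
  apply subset_closure
  apply Set.mem_biUnion ((hfin j).mem_toFinset.mpr hjZ)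
  rw [hi₀]
  exact hyU
end

section
/- If X is D-pseudocompact for some regular ultrafilter D over μ, then every Tychonoff power X^κ of X is weakly initially μ-compact. -/
open Cardinal Set

universe u v

/-! A product of `D`-pseudocompact spaces is `D`-pseudocompact: shrink the given open sets `O j` to
open boxes `∏ₖ W j k` and take, coordinatewise, a `D`-limit point `x k` of the sets `W j k`. A basic
neighbourhood of `x` restricts only finitely many coordinates, and finitely many members of `D` meet in
a member of `D`, so `x` is a `D`-limit point of the boxes.

A `D`-pseudocompact space is weakly initially `#I`-compact when `D` is regular: let `Z` witness
regularity, so every `j` lies in only finitely many `Z i`, and index an open cover as `U : I → Set Y`.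
If no finite subfamily had dense union, the open sets `O j = (closure (⋃_{j ∈ Z i} U i))ᶜ` would be
nonempty. A `D`-limit point of them lies in some `U i₀`, so `U i₀` meets `O j` for `D`-many `j`, in
particular for some `j ∈ Z i₀`; but `U i₀ ∩ O j = ∅` for such `j`. -/

theorem DLimitSets.mono {X : Type u} {I : Type v} [TopologicalSpace X] {D : Ultrafilter I}
    {O O' : I → Set X} {x : X} (hx : DLimitSets D O x) (hO : ∀ j, O j ⊆ O' j) :
    DLimitSets D O' x :=
  fun U hU => Filter.mem_of_superset (hx U hU) fun j ⟨y, hyU, hyO⟩ => ⟨y, hyU, hO j hyO⟩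

section Product

variable {I : Type v} {ι : Type u} {X : ι → Type u} [∀ k, TopologicalSpace (X k)]

theorem DLimitSets.univ_pi {D : Ultrafilter I} {W : I → ∀ k, Set (X k)} {x : ∀ k, X k}
    (hne : ∀ j k, (W j k).Nonempty) (hx : ∀ k, DLimitSets D (fun j => W j k) (x k)) :
    DLimitSets D (fun j => univ.pi (W j)) x := by
  intro U hU
  rw [nhds_pi, Filter.mem_pi] at hU
  obtain ⟨s, hs, u, hu, hsub⟩ := hU
  have hmeet : ∀ᶠ j in (D : Filter I), ∀ k ∈ s, (u k ∩ W j k).Nonempty :=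
    (Filter.eventually_all_finite hs).mpr fun k _ => hx k (u k) (hu k)
  refine Filter.mem_of_superset hmeet fun j hj => ?_
  have hpt : ∀ k, ∃ y ∈ W j k, k ∈ s → y ∈ u k := by
    intro k
    by_cases hk : k ∈ s
    · obtain ⟨y, hyu, hyW⟩ := hj k hk
      exact ⟨y, hyW, fun _ => hyu⟩
    · obtain ⟨y, hy⟩ := hne j k
      exact ⟨y, hy, fun h => absurd h hk⟩
  choose g hgW hgu using hpt
  exact ⟨g, hsub fun k hk => hgu k hk, fun k _ => hgW k⟩

theorem exists_isOpen_univ_pi_subset {s : Set (∀ k, X k)} (hs : IsOpen s) {f : ∀ k, X k}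
    (hf : f ∈ s) : ∃ W : ∀ k, Set (X k), (∀ k, IsOpen (W k) ∧ f k ∈ W k) ∧ univ.pi W ⊆ s := by
  classical
  obtain ⟨t, u, hu, hsub⟩ := isOpen_pi_iff.mp hs f hf
  refine ⟨fun k => if k ∈ t then u k else univ, fun k => ?_, ?_⟩
  · dsimp only
    split_ifs with hk
    exacts [hu k hk, ⟨isOpen_univ, mem_univ _⟩]
  · simpa only [← Finset.mem_coe, univ_pi_ite] using hsub

theorem DPseudocompact.pi {D : Ultrafilter I} (hX : ∀ k, DPseudocompact (X k) D) :
    DPseudocompact (∀ k, X k) D := by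
  intro O hO hne
  choose f hf using hne
  choose W hW hWO using fun j => exists_isOpen_univ_pi_subset (hO j) (hf j)
  choose x hx using fun k =>
    hX k (fun j => W j k) (fun j => (hW j k).1) (fun j => ⟨f j k, (hW j k).2⟩)
  exact ⟨x, (DLimitSets.univ_pi (fun j k => ⟨f j k, (hW j k).2⟩) hx).mono hWO⟩

end Product

theorem RegularUltrafilter.exists_finite_setOf_mem {I : Type v} {D : Ultrafilter I}
    (hD : RegularUltrafilter D) :
    ∃ Z : I → Set I, (∀ i, Z i ∈ D) ∧ ∀ j, {i | j ∈ Z i}.Finite := by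
  obtain ⟨Z, hZ, hZinf⟩ := hD
  refine ⟨Z, hZ, fun j => not_not.mp fun hinf => ?_⟩
  have hj : j ∈ ⋂ i ∈ {i | j ∈ Z i}, Z i := mem_iInter₂.mpr fun _ hi => hi
  rwa [hZinf _ hinf] at hj

theorem DPseudocompact.exists_finite_dense_iUnion {Y : Type u} [TopologicalSpace Y]
    {I : Type v} {D : Ultrafilter I} (hY : DPseudocompact Y D) (hD : RegularUltrafilter D)
    {U : I → Set Y} (hU : ∀ i, IsOpen (U i)) (hcov : ⋃ i, U i = Set.univ) :
    ∃ s : Set I, s.Finite ∧ Dense (⋃ i ∈ s, U i) := by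
  by_contra! hnd
  obtain ⟨Z, hZ, hfin⟩ := hD.exists_finite_setOf_mem
  let O : I → Set Y := fun j => (closure (⋃ i ∈ {i | j ∈ Z i}, U i))ᶜ
  have hOne : ∀ j, (O j).Nonempty := fun j => by
    simpa only [O, nonempty_compl, ne_eq, ← dense_iff_closure_eq] using hnd _ (hfin j)
  obtain ⟨x, hx⟩ := hY O (fun _ => isClosed_closure.isOpen_compl) hOne
  obtain ⟨i₀, hxi₀⟩ := mem_iUnion.mp (hcov ▸ mem_univ x)
  obtain ⟨j, ⟨y, hyU, hyO⟩, hj⟩ :=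
    Ultrafilter.nonempty_of_mem (Filter.inter_mem (hx _ ((hU i₀).mem_nhds hxi₀)) (hZ i₀))
  exact hyO (subset_closure (mem_biUnion hj hyU))

theorem weaklyInitiallyCompact_of_forall_iUnion {Y : Type u} [TopologicalSpace Y] {I : Type u}
    (h : ∀ U : I → Set Y, (∀ i, IsOpen (U i)) → ⋃ i, U i = Set.univ →
      ∃ s : Set I, s.Finite ∧ Dense (⋃ i ∈ s, U i)) :
    WeaklyInitiallyCompact Y #I := by
  intro 𝒰 hopen hcov hcard
  rcases 𝒰.eq_empty_or_nonempty with rfl | h𝒰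
  · refine ⟨∅, by simp, ?_⟩
    rw [sUnion_empty] at hcov
    exact fun y => (notMem_empty y (hcov ▸ mem_univ y)).elim
  have := h𝒰.to_subtype
  obtain ⟨e⟩ := hcard
  set U : I → Set Y := Subtype.val ∘ Function.invFun e
  have hrange : range U = 𝒰 := by
    rw [range_comp, (Function.invFun_surjective e.injective).range_eq, image_univ,
      Subtype.range_coe]
  obtain ⟨s, hs, hdense⟩ := h U (fun i => hopen _ (hrange ▸ mem_range_self i))
    (by rw [← sUnion_range, hrange, hcov])
  refine ⟨hs.toFinset.image U, ?_, ?_⟩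
  · simpa only [Finset.coe_image, hs.coe_toFinset, ← hrange] using image_subset_range U s
  · simpa only [Finset.coe_image, hs.coe_toFinset, sUnion_image] using hdense

theorem dPseudocompact_regular_implies_power_weaklyInitiallyCompact_general
    {X : Type u} [TopologicalSpace X] (I : Type u)
    (D : Ultrafilter I) (hreg : RegularUltrafilter D)
    (hX : DPseudocompact X D) (κ : Type u) :
    WeaklyInitiallyCompact (κ → X) (Cardinal.mk I) :=
  weaklyInitiallyCompact_of_forall_iUnion fun _ hU hcov =>
    (DPseudocompact.pi fun _ => hX).exists_finite_dense_iUnion hreg hU hcov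

theorem dPseudocompact_regular_implies_power_weaklyInitiallyCompact
    {X : Type u} [TopologicalSpace X] (I : Type u) [Infinite I]
    (D : Ultrafilter I) (hreg : RegularUltrafilter D)
    (hX : DPseudocompact X D) (κ : Type u) :
    WeaklyInitiallyCompact (κ → X) (Cardinal.mk I) :=
  dPseudocompact_regular_implies_power_weaklyInitiallyCompact_general I D hreg hX κ
end

section
/- If D is an ultrafilter over a set I and (X_j)_{j∈J} is a family of topological spaces each of which is D-pseudocompact, then the Tychonoff product ∏_{j∈J} X_j is D-pseudocompact. -/
open Cardinal Set

universe u v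

theorem dPseudocompact_product {I : Type u} (D : Ultrafilter I)
    {J : Type v} {X : J → Type v} [∀ j, TopologicalSpace (X j)]
    (hX : ∀ j, DPseudocompact (X j) D) :
    DPseudocompact (∀ j, X j) D := by
  intro O hOopen hOne
  -- pick a point in each O i
  classical
  choose p hp using hOne
  -- shrink each O i to a basic open box
  have hbox : ∀ i, ∃ (F : Finset J) (u : ∀ j, Set (X j)),
      (∀ j ∈ F, IsOpen (u j) ∧ p i j ∈ u j) ∧ (F : Set J).pi u ⊆ O i := by
    intro i
    exact (isOpen_pi_iff.1 (hOopen i)) (p i) (hp i)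
  choose F u hu hsub using hbox
  -- the coordinate open sets
  set C : I → ∀ j, Set (X j) := fun i j => if j ∈ F i then u i j else Set.univ with hC
  have hCopen : ∀ i j, IsOpen (C i j) := by
    intro i j
    by_cases h : j ∈ F i
    · simpa [hC, h] using (hu i j h).1
    · simp [hC, h, isOpen_univ]
  have hCmem : ∀ i j, p i j ∈ C i j := by
    intro i j
    by_cases h : j ∈ F i
    · simpa [hC, h] using (hu i j h).2
    · simp [hC, h]
  have hboxsub : ∀ i, Set.univ.pi (fun j => C i j) ⊆ O i := by
    intro i y hy
    apply hsub i
    intro j hj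
    have := hy j (Set.mem_univ j)
    simp only [hC] at this
    rwa [if_pos (Finset.mem_coe.1 hj)] at this
  -- get D-limit points coordinatewise
  have hx : ∀ j, ∃ x : X j, DLimitSets D (fun i => C i j) x := by
    intro j
    exact hX j (fun i => C i j) (fun i => hCopen i j) (fun i => ⟨p i j, hCmem i j⟩)
  choose x hxlim using hx
  refine ⟨x, ?_⟩
  intro U hU
  -- get a basic open box neighborhood of x inside U
  obtain ⟨W, hWU, hWopen, hxW⟩ := mem_nhds_iff.1 hU
  obtain ⟨G, V, hV, hVsub⟩ := (isOpen_pi_iff.1 hWopen) x hxW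
  -- each coordinate condition is in D
  have hA : ∀ j ∈ G, {i | (V j ∩ C i j).Nonempty} ∈ D := by
    intro j hj
    exact hxlim j (V j) ((hV j hj).1.mem_nhds (hV j hj).2)
  have hInter : {i | ∀ j ∈ G, (V j ∩ C i j).Nonempty} ∈ D := by
    have : (⋂ j ∈ G, {i | (V j ∩ C i j).Nonempty}) ∈ D :=
      (Filter.biInter_mem G.finite_toSet).2 hA
    convert this using 1
    ext i
    simp
  refine D.toFilter.mem_of_superset hInter ?_
  intro i hi
  classical
  -- build a witness point
  refine ⟨fun j => if h : j ∈ G then (hi j h).some else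
    Set.Nonempty.some ⟨p i j, hCmem i j⟩, ?_, ?_⟩
  · apply hWU
    apply hVsub
    intro j hj
    dsimp only
    rw [dif_pos (Finset.mem_coe.1 hj)]
    exact ((hi j hj).some_mem).1
  · apply hboxsub i
    intro j _
    dsimp only
    by_cases h : j ∈ G
    · rw [dif_pos h]
      exact ((hi j h).some_mem).2
    · rw [dif_neg h]
      exact Set.Nonempty.some_mem ⟨p i j, hCmem i j⟩
end

section
/- A topological space X is weakly initially λ-compact for every infinite cardinal λ (equivalently, every open cover of X has a finite subfamily with dense union) if and only if X is D-pseudocompact for every ultrafilter D over every set. -/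
open Cardinal Set

universe u v

/-
If `O` had no `D`-limit point, the open sets meeting only a `D`-small set of the `O i` would
cover `X`; a finite subfamily of them has dense union, and the `D`-large set of indices `i`
for which `O i` misses all of them is nonempty, but a nonempty open `O i` must meet a dense
set. Conversely, if the cover `𝒰` has no finite subfamily with dense union, the complements
of the closures of the finite unions are nonempty and open; indexing them by finite sets and
taking an ultrafilter finer than `atTop`, a limit point lies in some `U ∈ 𝒰`, which is
eventually contained in the union and so misses eventually all of them.
-/

def HasFiniteDenseSubcovers (X : Type u) [TopologicalSpace X] : Prop :=
  ∀ 𝒰 : Set (Set X), (∀ U ∈ 𝒰, IsOpen U) → ⋃₀ 𝒰 = Set.univ →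
    ∃ t : Finset (Set X), ↑t ⊆ 𝒰 ∧ Dense (⋃₀ (t : Set (Set X)))

section

variable {X : Type u} [TopologicalSpace X]

theorem forall_weaklyInitiallyCompact_iff_hasFiniteDenseSubcovers :
    (∀ lam : Cardinal.{u}, ℵ₀ ≤ lam → WeaklyInitiallyCompact X lam) ↔
      HasFiniteDenseSubcovers X := by
  refine ⟨fun h 𝒰 hopen hcov => ?_, fun h _ _ 𝒰 hopen hcov _ => h 𝒰 hopen hcov⟩
  exact h (max ℵ₀ #(Set X)) (le_max_left _ _) 𝒰 hopen hcov
    ((mk_set_le 𝒰).trans (le_max_right _ _))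

theorem HasFiniteDenseSubcovers.dPseudocompact (h : HasFiniteDenseSubcovers X)
    {I : Type v} (D : Ultrafilter I) : DPseudocompact X D := by
  intro O hOopen hOne
  by_contra! hno
  let 𝒰 : Set (Set X) := {U | IsOpen U ∧ {i | (U ∩ O i).Nonempty} ∉ D}
  have hcov : ⋃₀ 𝒰 = Set.univ := by
    refine eq_univ_of_forall fun x => ?_
    obtain ⟨U, hU, hUD⟩ : ∃ U ∈ nhds x, {i | (U ∩ O i).Nonempty} ∉ D := by
      simpa [DLimitSets] using hno x
    obtain ⟨V, hVU, hVopen, hxV⟩ := mem_nhds_iff.mp hU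
    refine ⟨V, ⟨hVopen, fun hV => hUD (D.mem_of_superset hV fun i => ?_)⟩, hxV⟩
    exact Nonempty.mono (inter_subset_inter_left _ hVU)
  obtain ⟨t, ht𝒰, htdense⟩ := h 𝒰 (fun U hU => hU.1) hcov
  have hmiss : (⋂ U ∈ t, {i | (U ∩ O i).Nonempty}ᶜ) ∈ D :=
    (Filter.biInter_finset_mem t).mpr fun U hU =>
      Ultrafilter.compl_mem_iff_notMem.mpr (ht𝒰 hU).2
  obtain ⟨i, hi⟩ := D.nonempty_of_mem hmiss
  obtain ⟨y, hyO, U, hUt, hyU⟩ := htdense.inter_open_nonempty (O i) (hOopen i) (hOne i)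
  exact mem_iInter₂.mp hi U hUt ⟨y, hyU, hyO⟩

theorem HasFiniteDenseSubcovers.of_dPseudocompact
    (h : DPseudocompact X (Ultrafilter.of (Filter.atTop : Filter (Finset (Set X))))) :
    HasFiniteDenseSubcovers X := by
  classical
  intro 𝒰 hopen hcov
  by_contra! hno
  let O : Finset (Set X) → Set X := fun s => (closure (⋃₀ ↑(s.filter (· ∈ 𝒰))))ᶜ
  have hOne : ∀ s, (O s).Nonempty := fun s => by
    simpa [O, Dense, not_forall, Set.Nonempty] using hno (s.filter (· ∈ 𝒰)) fun U hU => (Finset.mem_filter.mp hU).2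
  obtain ⟨x, hx⟩ := h O (fun _ => isClosed_closure.isOpen_compl) hOne
  obtain ⟨U, hU𝒰, hxU⟩ := (hcov ▸ mem_univ x : x ∈ ⋃₀ 𝒰)
  have hmeet := hx U ((hopen U hU𝒰).mem_nhds hxU)
  have hcontain : {s : Finset (Set X) | {U} ≤ s} ∈ Ultrafilter.of Filter.atTop :=
    Ultrafilter.of_le _ (Filter.mem_atTop {U})
  obtain ⟨s, ⟨y, hyU, hyO⟩, hUs⟩ :=
    Ultrafilter.nonempty_of_mem (Filter.inter_mem hmeet hcontain)
  refine hyO (subset_closure ⟨U, ?_, hyU⟩)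
  exact Finset.mem_filter.mpr ⟨hUs (Finset.mem_singleton_self U), hU𝒰⟩

end

theorem weaklyInitiallyCompact_iff_dPseudocompact
    {X : Type u} [TopologicalSpace X] :
    (∀ lam : Cardinal.{u}, Cardinal.aleph0 ≤ lam → WeaklyInitiallyCompact X lam) ↔
      (∀ (I : Type u) (D : Ultrafilter I), DPseudocompact X D) := by
  rw [forall_weaklyInitiallyCompact_iff_hasFiniteDenseSubcovers]
  exact ⟨fun h _ D => h.dPseudocompact D, fun h => .of_dPseudocompact (h _ _)⟩
end

section
/- For a topological space X, the following are equivalent: (1) every open cover of X has a finite subfamily whose union is dense; (2) for every infinite cardinal λ there exists a regular ultrafilter D over λ such that X is D-pseudocompact. -/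
open Cardinal Set

universe u v

/- Regular ultrafilters of every infinite size exist: any ultrafilter on the finite subsets of `J`
finer than `atTop` is regular, witnessed by the sets `{t | s ⊆ t}`.

If every open cover has a finite dense subfamily and `x` were not a `D`-limit point of the open
sets `O i`, some open `V x ∋ x` would meet `O i` only for `D`-few `i`; a finite dense subfamily of
the `V x` would then miss `O i` for `D`-many `i`, although density makes it meet every `O i`.

Conversely, a regular `D` over `I` gives sets `Z j ∈ D` with each `i` in only finitely many `Z j`.
Index an open cover injectively by `I`; if no finite subfamily were dense, let `O i` be the
complement of the closure of the union of the members `U j` with `i ∈ Z j`. At a `D`-limit point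
`x ∈ U j`, some `i ∈ Z j` has `U j` meeting `O i`, yet `U j` lies in that closure. -/

lemma exists_regularUltrafilter_finset (J : Type*) :
    ∃ D : Ultrafilter (Finset J), RegularUltrafilter D := by
  refine ⟨Ultrafilter.of Filter.atTop, fun s => {t | s ⊆ t},
    fun s => Ultrafilter.of_le _ (Filter.mem_atTop s), fun S hS => ?_⟩
  refine eq_empty_of_forall_notMem fun t ht => hS ?_
  exact t.powerset.finite_toSet.subset fun s hs => Finset.mem_powerset.2 (mem_iInter₂.1 ht s hs)

lemma RegularUltrafilter.exists_pointFinite {I : Type v} {D : Ultrafilter I}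
    (hD : RegularUltrafilter D) :
    ∃ Z : I → Set I, (∀ j, Z j ∈ D) ∧ ∀ i, {j | i ∈ Z j}.Finite := by
  obtain ⟨Z, hZD, hZ⟩ := hD
  refine ⟨Z, hZD, fun i => not_not.1 fun hinf => ?_⟩
  simpa using (hZ _ hinf).subset (mem_iInter₂.2 fun _ hj => hj : i ∈ ⋂ j ∈ {j | i ∈ Z j}, Z j)

lemma dPseudocompact_of_forall_exists_finset_dense {X : Type u} [TopologicalSpace X]
    {I : Type v}
    (H : ∀ 𝒰 : Set (Set X), (∀ U ∈ 𝒰, IsOpen U) → ⋃₀ 𝒰 = Set.univ →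
        ∃ t : Finset (Set X), ↑t ⊆ 𝒰 ∧ Dense (⋃₀ (t : Set (Set X))))
    (D : Ultrafilter I) : DPseudocompact X D := by
  intro O hOopen hOne
  by_contra! hno
  have hV : ∀ x, ∃ V : Set X, IsOpen V ∧ x ∈ V ∧ {i | (V ∩ O i).Nonempty} ∉ D := by
    intro x
    obtain ⟨U, hU, hUD⟩ := not_forall₂.1 (hno x)
    obtain ⟨V, hVU, hVopen, hxV⟩ := mem_nhds_iff.1 hU
    exact ⟨V, hVopen, hxV, fun hV => hUD (D.mem_of_superset hV
      fun i hi => hi.mono (inter_subset_inter_left _ hVU))⟩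
  choose V hVopen hxV hVD using hV
  obtain ⟨t, htV, htdense⟩ := H (range V) (forall_mem_range.2 hVopen)
    (eq_univ_of_forall fun x => mem_sUnion_of_mem (hxV x) (mem_range_self x))
  have hmissing : ⋂ W ∈ t, {i | (W ∩ O i).Nonempty}ᶜ ∈ D := by
    refine (Filter.biInter_finset_mem t).2 fun W hW => ?_
    obtain ⟨x, rfl⟩ := htV hW
    exact Ultrafilter.compl_mem_iff_notMem.2 (hVD x)
  obtain ⟨i, hi⟩ := Ultrafilter.nonempty_of_mem hmissing
  obtain ⟨y, hyO, W, hW, hyW⟩ := htdense.inter_open_nonempty _ (hOopen i) (hOne i)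
  exact mem_iInter₂.1 hi W hW ⟨y, hyW, hyO⟩

lemma DPseudocompact.exists_finset_dense_iUnion {X : Type u} [TopologicalSpace X]
    {I : Type v} {D : Ultrafilter I} (hX : DPseudocompact X D) {ι : Type*}
    {U : ι → Set X} (hUopen : ∀ j, IsOpen (U j)) (hUcover : ⋃ j, U j = Set.univ)
    {Z : ι → Set I} (hZD : ∀ j, Z j ∈ D) (hZ : ∀ i, {j | i ∈ Z j}.Finite) :
    ∃ s : Finset ι, Dense (⋃ j ∈ s, U j) := by
  by_contra! hnot
  set O : I → Set X := fun i => (closure (⋃ j ∈ (hZ i).toFinset, U j))ᶜ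
  have hOne : ∀ i, (O i).Nonempty := fun i =>
    nonempty_compl.2 fun h => hnot _ (dense_iff_closure_eq.2 h)
  obtain ⟨x, hx⟩ := hX O (fun i => isClosed_closure.isOpen_compl) hOne
  obtain ⟨j, hxj⟩ := mem_iUnion.1 (hUcover ▸ mem_univ x)
  obtain ⟨i, ⟨y, hyU, hyO⟩, hij⟩ := Ultrafilter.nonempty_of_mem
    (Filter.inter_mem (hx _ ((hUopen j).mem_nhds hxj)) (hZD j))
  exact hyO (subset_closure (mem_biUnion ((hZ i).mem_toFinset.2 hij) hyU))

theorem hi_iff_regular_dPseudocompact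
    {X : Type u} [TopologicalSpace X] :
    (∀ 𝒰 : Set (Set X), (∀ U ∈ 𝒰, IsOpen U) → ⋃₀ 𝒰 = Set.univ →
        ∃ t : Finset (Set X), ↑t ⊆ 𝒰 ∧ Dense (⋃₀ (t : Set (Set X)))) ↔
      (∀ lam : Cardinal.{u}, Cardinal.aleph0 ≤ lam →
        ∃ (I : Type u) (D : Ultrafilter I), Cardinal.mk I = lam ∧
          RegularUltrafilter D ∧ DPseudocompact X D) := by
  constructor
  · intro H lam hlam
    have : Infinite lam.out := Cardinal.infinite_iff.2 (by rwa [Cardinal.mk_out])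
    obtain ⟨D, hD⟩ := exists_regularUltrafilter_finset lam.out
    exact ⟨Finset lam.out, D, by rw [Cardinal.mk_finset_of_infinite, Cardinal.mk_out],
      hD, dPseudocompact_of_forall_exists_finset_dense H D⟩
  · intro H 𝒰 hopen hcover
    obtain ⟨I, D, hI, hD, hX⟩ := H (max #𝒰 ℵ₀) (le_max_right _ _)
    obtain ⟨g⟩ := (Cardinal.le_def 𝒰 I).1 (hI ▸ le_max_left _ _)
    obtain ⟨Z, hZD, hZ⟩ := hD.exists_pointFinite
    obtain ⟨s, hs⟩ := hX.exists_finset_dense_iUnion (U := ((↑) : 𝒰 → Set X))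
      (fun U => hopen U U.2) (by rwa [← sUnion_eq_iUnion]) (fun U => hZD (g U))
      (fun i => (hZ i).preimage g.injective.injOn)
    refine ⟨s.map (Function.Embedding.subtype _), by simp, ?_⟩
    simpa [sUnion_image] using hs
end

section
/- A regular Hausdorff (T3) space in which every open cover has a finite subfamily with dense union is compact. -/
open Cardinal Set

universe u v

theorem t3_hi_compact {X : Type u} [TopologicalSpace X] [T3Space X]
    (hX : ∀ 𝒰 : Set (Set X), (∀ U ∈ 𝒰, IsOpen U) → ⋃₀ 𝒰 = Set.univ →
      ∃ t : Finset (Set X), ↑t ⊆ 𝒰 ∧ Dense (⋃₀ (t : Set (Set X)))) :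
    CompactSpace X := by
  cases isEmpty_or_nonempty X with
  | inl h =>
    constructor
    simp [Set.eq_empty_of_isEmpty (Set.univ : Set X)]
  | inr h =>
    constructor
    apply isCompact_of_finite_subcover
    intro ι U hU hcov
    have h1 : ∀ x : X, ∃ (i : ι) (V : Set X), IsOpen V ∧ x ∈ V ∧ closure V ⊆ U i := by
      intro x
      obtain ⟨i, hi⟩ := Set.mem_iUnion.mp (hcov (Set.mem_univ x))
      obtain ⟨s, hs, hscl, hssub⟩ :=
        exists_mem_nhds_isClosed_subset ((hU i).mem_nhds hi)
      exact ⟨i, interior s, isOpen_interior, mem_interior_iff_mem_nhds.mpr hs,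
        (closure_minimal interior_subset hscl).trans hssub⟩
    choose i V hVopen hxV hVcl using h1
    obtain ⟨t, ht, hdense⟩ := hX (Set.range V)
      (by rintro W ⟨x, rfl⟩; exact hVopen x)
      (Set.eq_univ_of_forall fun x => ⟨V x, ⟨x, rfl⟩, hxV x⟩)
    classical
    have hg : ∀ W ∈ t, ∃ x : X, V x = W := fun W hW => ht hW
    set g : Set X → X := fun W =>
      if h : ∃ x : X, V x = W then h.choose else Classical.arbitrary X with hgdef
    have hgV : ∀ W ∈ t, V (g W) = W := by
      intro W hW
      have h := hg W hW
      simp only [hgdef, dif_pos h]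
      exact h.choose_spec
    refine ⟨t.image (fun W => i (g W)), fun x _ => ?_⟩
    have hx : x ∈ closure (⋃ W ∈ (t : Set (Set X)), W) := by
      have := hdense x
      rwa [Set.sUnion_eq_biUnion] at this
    have hfin : (t : Set (Set X)).Finite := t.finite_toSet
    rw [hfin.closure_biUnion] at hx
    obtain ⟨W, hW, hxW⟩ := Set.mem_iUnion₂.mp hx
    refine Set.mem_iUnion₂.mpr ⟨i (g W), Finset.mem_image_of_mem _ hW, ?_⟩
    apply hVcl (g W)
    rwa [hgV W hW]
end

section
/- Any Tychonoff product of a family of H(i) spaces is H(i). -/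
open Cardinal Set

universe u v

/-- A space is H(i) if every open cover has a finite subfamily with dense union. -/
def HI (X : Type u) [TopologicalSpace X] : Prop :=
  ∀ 𝒰 : Set (Set X), (∀ U ∈ 𝒰, IsOpen U) → ⋃₀ 𝒰 = Set.univ →
    ∃ t : Finset (Set X), ↑t ⊆ 𝒰 ∧ Dense (⋃₀ (t : Set (Set X)))

/-!
A space is H(i) exactly when every ultrafilter `F` has a θ-cluster point: a point `x` such that
`closure U ∈ F` for every open `U ∋ x` (the analogue of the ultrafilter characterisation of
compactness). For a product, the closure of a basic open box is the box of closures, so picking a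
θ-cluster point of each projected ultrafilter gives a θ-cluster point of the ultrafilter itself.
-/

open Filter

def IsThetaClusterPt {Y : Type*} [TopologicalSpace Y] (F : Ultrafilter Y) (x : Y) : Prop :=
  ∀ U : Set Y, IsOpen U → x ∈ U → closure U ∈ F

theorem Set.Finite.dense_sUnion_iff {Y : Type*} [TopologicalSpace Y] {t : Set (Set Y)}
    (ht : t.Finite) : Dense (⋃₀ t) ↔ ⋂ U ∈ t, (closure U)ᶜ = ∅ := by
  rw [dense_iff_closure_eq, ht.closure_sUnion, ← compl_iUnion₂, compl_empty_iff]

theorem HI.exists_isThetaClusterPt {Y : Type u} [TopologicalSpace Y] (h : HI Y)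
    (F : Ultrafilter Y) : ∃ x, IsThetaClusterPt F x := by
  by_contra! hF
  have hcov : ⋃₀ {U : Set Y | IsOpen U ∧ (closure U)ᶜ ∈ F} = Set.univ := by
    refine eq_univ_of_forall fun x => ?_
    obtain ⟨U, hU, hxU, hUF⟩ : ∃ U, IsOpen U ∧ x ∈ U ∧ closure U ∉ F := by
      simpa [IsThetaClusterPt] using hF x
    exact ⟨U, ⟨hU, Ultrafilter.compl_mem_iff_notMem.2 hUF⟩, hxU⟩
  obtain ⟨t, hts, hdense⟩ := h _ (fun U hU => hU.1) hcov
  have hmem : ⋂ U ∈ (t : Set (Set Y)), (closure U)ᶜ ∈ F :=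
    (biInter_mem t.finite_toSet).2 fun U hU => (hts hU).2
  rw [t.finite_toSet.dense_sUnion_iff.1 hdense] at hmem
  exact F.empty_notMem hmem

theorem hi_of_forall_exists_isThetaClusterPt {Y : Type u} [TopologicalSpace Y]
    (h : ∀ F : Ultrafilter Y, ∃ x, IsThetaClusterPt F x) : HI Y := by
  classical
  intro 𝒰 h𝒰 hcov
  by_contra! hnot
  obtain ⟨F, hF⟩ := Ultrafilter.exists_ultrafilter_of_finite_inter_nonempty
    ((fun U => (closure U)ᶜ) '' 𝒰) fun T hT => by
      obtain ⟨T', hT'𝒰, rfl⟩ := Finset.subset_set_image_iff.1 hT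
      rw [Finset.coe_image, sInter_image, nonempty_iff_ne_empty, Ne,
        ← T'.finite_toSet.dense_sUnion_iff]
      exact hnot T' hT'𝒰
  obtain ⟨x, hx⟩ := h F
  obtain ⟨U, hU𝒰, hxU⟩ := mem_sUnion.1 (hcov ▸ mem_univ x)
  exact Ultrafilter.compl_mem_iff_notMem.1 (hF (mem_image_of_mem _ hU𝒰))
    (hx U (h𝒰 U hU𝒰) hxU)

theorem isThetaClusterPt_pi {ι : Type*} {Y : ι → Type*} [∀ i, TopologicalSpace (Y i)]
    {F : Ultrafilter (∀ i, Y i)} {x : ∀ i, Y i}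
    (hx : ∀ i, IsThetaClusterPt (F.map (Function.eval i)) (x i)) : IsThetaClusterPt F x := by
  intro U hU hxU
  obtain ⟨t, V, hV, hVU⟩ := isOpen_pi_iff.1 hU x hxU
  have hbox : (t : Set ι).pi (fun i => closure (V i)) ∈ F := by
    rw [pi_def]
    exact (biInter_mem t.finite_toSet).2 fun i hi =>
      Ultrafilter.mem_map.1 (hx i (V i) (hV i hi).1 (hV i hi).2)
  refine mem_of_superset hbox ?_
  rw [← closure_pi_set]
  exact closure_mono hVU

theorem product_HI {J : Type u} {X : J → Type u} [∀ j, TopologicalSpace (X j)]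
    (hX : ∀ j, HI (X j)) : HI (∀ j, X j) := by
  refine hi_of_forall_exists_isThetaClusterPt fun F => ?_
  choose x hx using fun j => (hX j).exists_isThetaClusterPt (F.map (Function.eval j))
  exact ⟨x, isThetaClusterPt_pi hx⟩
end

section
/- Let X be a topological space and F a family of subsets of X. If X is F-[ω,λ]-compact and 2^μ ≤ λ, then X is F-D-compact for every ultrafilter D over any set of cardinality at most μ. -/
open Cardinal Set

universe u v

/-- `X` is `F`-`[ω,λ]`-compact. -/
def FOmegaLamCompact (X : Type u) [TopologicalSpace X]
    (F : Set (Set X)) (lam : Cardinal.{u}) : Prop :=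
  ∀ 𝒰 : Set (Set X), (∀ U ∈ 𝒰, IsOpen U) → ⋃₀ 𝒰 = Set.univ →
    Cardinal.mk 𝒰 ≤ lam →
    ∃ t : Finset (Set X), ↑t ⊆ 𝒰 ∧
      ∀ A ∈ F, (A ∩ ⋃₀ (t : Set (Set X))).Nonempty

/-- `X` is `F`-`D`-compact. -/
def FDCompact (X : Type u) {I : Type v} [TopologicalSpace X]
    (F : Set (Set X)) (D : Ultrafilter I) : Prop :=
  ∀ f : I → Set X, (∀ i, f i ∈ F) → ∃ x : X, DLimitSets D f x

theorem fOmegaLamCompact_implies_fDCompact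
    {X : Type u} [TopologicalSpace X] (F : Set (Set X))
    (lam mu : Cardinal.{u}) (hlam : Cardinal.aleph0 ≤ lam)
    (hmu : Cardinal.aleph0 ≤ mu) (h2 : 2 ^ mu ≤ lam)
    (hX : FOmegaLamCompact X F lam)
    (I : Type u) (hI : Cardinal.mk I ≤ mu) (D : Ultrafilter I) :
    FDCompact X F D := by
  intro f hf
  by_contra hcon
  push_neg at hcon
  have hU : ∀ x : X, ∃ U, IsOpen U ∧ x ∈ U ∧ {i | (U ∩ f i).Nonempty} ∉ D := by
    intro x
    have h := hcon x
    simp only [DLimitSets] at h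
    push_neg at h
    obtain ⟨U, hUn, hUD⟩ := h
    obtain ⟨W, hWU, hWo, hxW⟩ := mem_nhds_iff.mp hUn
    refine ⟨W, hWo, hxW, fun hmem => hUD ?_⟩
    exact D.mem_of_superset hmem (fun i ⟨y, hy1, hy2⟩ => ⟨y, hWU hy1, hy2⟩)
  choose W hWo hxW hWD using hU
  set A : X → Set I := fun x => {i | (W x ∩ f i).Nonempty} with hA
  set V : Set I → Set X := fun S => ⋃ x ∈ {x | A x = S}, W x with hV
  set 𝒰 : Set (Set X) := V '' {S | S ∉ D} with h𝒰
  have hmeet : ∀ S i, (V S ∩ f i).Nonempty → i ∈ S := by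
    intro S i ⟨y, hy1, hy2⟩
    simp only [hV, mem_iUnion] at hy1
    obtain ⟨x, hxA, hyx⟩ := hy1
    exact hxA ▸ ⟨y, hyx, hy2⟩
  have hopen : ∀ u ∈ 𝒰, IsOpen u := by
    rintro u ⟨S, _, rfl⟩
    exact isOpen_biUnion fun x _ => hWo x
  have hcov : ⋃₀ 𝒰 = Set.univ := by
    apply Set.eq_univ_of_forall
    intro x
    exact ⟨V (A x), ⟨A x, hWD x, rfl⟩, mem_biUnion rfl (hxW x)⟩
  have hcard : Cardinal.mk 𝒰 ≤ lam := by
    calc Cardinal.mk 𝒰 ≤ Cardinal.mk {S : Set I | S ∉ D} := Cardinal.mk_image_le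
      _ ≤ Cardinal.mk (Set I) := Cardinal.mk_set_le _
      _ = 2 ^ Cardinal.mk I := Cardinal.mk_set
      _ ≤ 2 ^ mu := Cardinal.power_le_power_left (by norm_num) hI
      _ ≤ lam := h2
  obtain ⟨t, htsub, htF⟩ := hX 𝒰 hopen hcov hcard
  have hcover : (Set.univ : Set I) ⊆ ⋃ u ∈ (t : Set (Set X)), {i | (u ∩ f i).Nonempty} := by
    intro i _
    obtain ⟨y, hy1, u, hu, hyu⟩ := htF (f i) (hf i)
    simp only [mem_iUnion]
    exact ⟨u, hu, y, hyu, hy1⟩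
  have huniv : (⋃ u ∈ (t : Set (Set X)), {i | (u ∩ f i).Nonempty}) ∈ D := by
    exact D.mem_of_superset D.univ_mem hcover
  obtain ⟨u, hu, huD⟩ := (Ultrafilter.finite_biUnion_mem_iff t.finite_toSet).mp huniv
  obtain ⟨S, hSD, hSV⟩ := htsub hu
  apply hSD
  refine D.mem_of_superset huD ?_
  intro i hi
  exact hmeet S i (by rwa [hSV])
end

section
/- If X is an initially λ-compact topological space and 2^μ ≤ λ, then X is D-compact for every ultrafilter D over any set of cardinality at most μ. -/
/-!
Given `f : I → X`, the closures of the images `f '' A`, `A ∈ D`, form at most `2 ^ #I ≤ λ` closed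
sets with the finite intersection property, because `D` is closed under finite intersections.
Initial `λ`-compactness puts a point `x` in all of them, so `x` is a cluster point of the ultrafilter
`D.map f`, and a cluster point of an ultrafilter is a limit.
-/

open Cardinal Set

universe u v

/-- Every open cover of cardinality at most `lam` has a finite subcover. -/
def InitiallyCompact (X : Type u) [TopologicalSpace X] (lam : Cardinal.{u}) : Prop :=
  ∀ 𝒰 : Set (Set X), (∀ U ∈ 𝒰, IsOpen U) → ⋃₀ 𝒰 = Set.univ →
    Cardinal.mk 𝒰 ≤ lam →
    ∃ t : Finset (Set X), ↑t ⊆ 𝒰 ∧ ⋃₀ (t : Set (Set X)) = Set.univ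

/-- `X` is `D`-compact: every `I`-indexed sequence of points has a `D`-limit. -/
def DCompact (X : Type u) {I : Type v} [TopologicalSpace X] (D : Ultrafilter I) : Prop :=
  ∀ f : I → X, ∃ x : X, ∀ U ∈ nhds x, {i | f i ∈ U} ∈ D

namespace InitiallyCompact

variable {X : Type u} [TopologicalSpace X] {lam : Cardinal.{u}}

theorem exists_finset_iUnion_eq_univ (hX : InitiallyCompact X lam) {ι : Type u}
    (U : ι → Set X) (hU : ∀ i, IsOpen (U i)) (hcover : ⋃ i, U i = Set.univ) (hι : #ι ≤ lam) :
    ∃ s : Finset ι, ⋃ i ∈ s, U i = Set.univ := by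
  classical
  obtain ⟨t, htU, ht⟩ := hX (range U) (forall_mem_range.2 hU) (by rwa [sUnion_range])
    (mk_range_le.trans hι)
  rw [← image_univ] at htU
  obtain ⟨s, -, rfl⟩ := Finset.subset_set_image_iff.mp htU
  exact ⟨s, by rwa [Finset.coe_image, sUnion_image] at ht⟩

theorem iInter_nonempty (hX : InitiallyCompact X lam) {ι : Type u} (C : ι → Set X)
    (hC : ∀ i, IsClosed (C i)) (hfip : ∀ s : Finset ι, (⋂ i ∈ s, C i).Nonempty)
    (hι : #ι ≤ lam) : (⋂ i, C i).Nonempty := by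
  by_contra h
  rw [not_nonempty_iff_eq_empty] at h
  obtain ⟨s, hs⟩ := hX.exists_finset_iUnion_eq_univ (fun i => (C i)ᶜ)
    (fun i => (hC i).isOpen_compl) (by rw [← compl_iInter, h, compl_empty]) hι
  apply (hfip s).ne_empty
  rw [← compl_compl (⋂ i ∈ s, C i), compl_iInter₂, hs, compl_univ]

end InitiallyCompact

theorem Ultrafilter.tendsto_nhds_iff_forall_mem_closure_image {I X : Type*} [TopologicalSpace X]
    (D : Ultrafilter I) (f : I → X) (x : X) :
    Filter.Tendsto f D (nhds x) ↔ ∀ A ∈ D, x ∈ closure (f '' A) := by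
  rw [Filter.Tendsto, ← Ultrafilter.coe_map, ← Ultrafilter.clusterPt_iff, Ultrafilter.coe_map,
    (D.basis_sets.map f).clusterPt_iff_forall_mem_closure]
  rfl

theorem InitiallyCompact.dCompact {X : Type u} [TopologicalSpace X] {lam : Cardinal.{u}}
    (hX : InitiallyCompact X lam) {I : Type u} (hI : 2 ^ #I ≤ lam) (D : Ultrafilter I) :
    DCompact X D := by
  intro f
  have hfip : ∀ s : Finset {A : Set I // A ∈ D}, (⋂ A ∈ s, closure (f '' A)).Nonempty := by
    intro s
    obtain ⟨i, hi⟩ := D.nonempty_of_mem ((Filter.biInter_finset_mem s).mpr fun A _ => A.2)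
    exact ⟨f i, mem_iInter₂.mpr fun A hA => subset_closure (mem_image_of_mem f
      (mem_iInter₂.mp hi A hA))⟩
  obtain ⟨x, hx⟩ := hX.iInter_nonempty (fun A : {A : Set I // A ∈ D} => closure (f '' A))
    (fun _ => isClosed_closure) hfip ((mk_subtype_le _).trans (mk_set.trans_le hI))
  have hlim := (D.tendsto_nhds_iff_forall_mem_closure_image f x).mpr
    fun A hA => mem_iInter.mp hx ⟨A, hA⟩
  exact ⟨x, fun U hU => hlim hU⟩

theorem initiallyCompact_implies_dCompact_general
    {X : Type u} [TopologicalSpace X] (lam mu : Cardinal.{u})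
    (h2 : 2 ^ mu ≤ lam) (hX : InitiallyCompact X lam)
    (I : Type u) (hI : Cardinal.mk I ≤ mu) (D : Ultrafilter I) :
    DCompact X D :=
  hX.dCompact ((power_le_power_left two_ne_zero hI).trans h2) D

theorem initiallyCompact_implies_dCompact
    {X : Type u} [TopologicalSpace X] (lam mu : Cardinal.{u})
    (hlam : Cardinal.aleph0 ≤ lam) (hmu : Cardinal.aleph0 ≤ mu)
    (h2 : 2 ^ mu ≤ lam) (hX : InitiallyCompact X lam)
    (I : Type u) (hI : Cardinal.mk I ≤ mu) (D : Ultrafilter I) :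
    DCompact X D :=
  initiallyCompact_implies_dCompact_general lam mu h2 hX I hI D
end

section
/- If a topological space X is weakly initially λ-compact for every λ < ν and is [cf(ν), cf(ν)]-compact, where ν is a singular cardinal, then X is weakly initially ν-compact. -/
open Cardinal Set

universe u v

/-- Every open cover of cardinality exactly `κ` has a subcover of cardinality `< κ`. -/
def KappaKappaCompact (X : Type u) [TopologicalSpace X] (κ : Cardinal.{u}) : Prop :=
  ∀ 𝒰 : Set (Set X), (∀ U ∈ 𝒰, IsOpen U) → ⋃₀ 𝒰 = Set.univ →
    Cardinal.mk 𝒰 = κ →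
    ∃ 𝒱 ⊆ 𝒰, ⋃₀ 𝒱 = Set.univ ∧ Cardinal.mk 𝒱 < κ

/-!
Enumerate an open cover `𝒰` with `|𝒰| ≤ ν` in order type `ν.ord`. The unions of its initial
segments form an increasing open cover; restricted to a cofinal set of `cf ν` indices, it has by
`[cf ν, cf ν]`-compactness a subcover with fewer than `cf ν` members. Their indices are bounded,
so a single initial segment, of size `< ν`, already covers `X`, and weak initial compactness
below `ν` yields a finite subfamily of it with dense union.
-/

theorem KappaKappaCompact.exists_subcover_mk_lt_of_mk_le {X : Type u} [TopologicalSpace X]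
    {κ : Cardinal.{u}} (h : KappaKappaCompact X κ) {𝒰 : Set (Set X)}
    (hop : ∀ U ∈ 𝒰, IsOpen U) (hcov : ⋃₀ 𝒰 = Set.univ) (hcard : #𝒰 ≤ κ) :
    ∃ 𝒱 ⊆ 𝒰, ⋃₀ 𝒱 = Set.univ ∧ #𝒱 < κ := by
  rcases hcard.eq_or_lt with heq | hlt
  · exact h 𝒰 hop hcov heq
  · exact ⟨𝒰, Subset.rfl, hcov, hlt⟩

theorem KappaKappaCompact.exists_eq_univ_of_monotone {X α : Type u} [TopologicalSpace X]
    [LinearOrder α] (h : KappaKappaCompact X (Order.cof α)) {V : α → Set X}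
    (hmono : Monotone V) (hop : ∀ a, IsOpen (V a)) (hcov : ⋃ a, V a = Set.univ) :
    ∃ a, V a = Set.univ := by
  obtain ⟨S, hS, hScard⟩ := Order.exists_cof_eq α
  have hcovS : ⋃₀ (V '' S) = Set.univ := by
    refine eq_univ_of_forall fun x => ?_
    obtain ⟨a, hxa⟩ := mem_iUnion.1 (hcov ▸ mem_univ x)
    obtain ⟨b, hbS, hab⟩ := hS a
    exact ⟨V b, mem_image_of_mem V hbS, hmono hab hxa⟩
  obtain ⟨𝒱, h𝒱S, h𝒱cov, h𝒱card⟩ := h.exists_subcover_mk_lt_of_mk_le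
    (forall_mem_image.2 fun a _ => hop a) hcovS (mk_image_le.trans_eq hScard)
  choose idx hidx using fun W : 𝒱 => h𝒱S W.2
  obtain ⟨b, hb⟩ := (not_isCofinal_iff (s := range idx)).1 fun hcof =>
    (Order.cof_le hcof).not_gt (mk_range_le.trans_lt h𝒱card)
  refine ⟨b, eq_univ_of_forall fun x => ?_⟩
  obtain ⟨W, hW, hxW⟩ := h𝒱cov ▸ mem_univ x
  exact hmono (hb _ (mem_range_self ⟨W, hW⟩)).le ((hidx ⟨W, hW⟩).2 ▸ hxW)

theorem KappaKappaCompact.exists_subcover_mk_lt {X : Type u} [TopologicalSpace X]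
    {ν : Cardinal.{u}} (hν : ℵ₀ ≤ ν) (h : KappaKappaCompact X ν.ord.cof) {𝒰 : Set (Set X)}
    (hop : ∀ U ∈ 𝒰, IsOpen U) (hcov : ⋃₀ 𝒰 = Set.univ) (hcard : #𝒰 ≤ ν) :
    ∃ 𝒲 ⊆ 𝒰, ⋃₀ 𝒲 = Set.univ ∧ #𝒲 < ν := by
  obtain ⟨g⟩ : Nonempty (𝒰 ↪ ν.ord.ToType) := by rwa [← le_def, mk_ord_toType]
  set initialSegment : ν.ord.ToType → Set (Set X) := fun s => Subtype.val '' (g ⁻¹' Iic s)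
  have hsub s : initialSegment s ⊆ 𝒰 := image_subset_iff.2 fun U _ => U.2
  obtain ⟨b, hb⟩ := (Ordinal.cof_toType ν.ord ▸ h).exists_eq_univ_of_monotone
    (V := fun s => ⋃₀ initialSegment s)
    (fun s t hst => sUnion_mono (image_mono (preimage_mono (Iic_subset_Iic.2 hst))))
    (fun s => isOpen_sUnion fun U hU => hop U (hsub s hU))
    (eq_univ_of_forall fun x => by
      obtain ⟨U, hU, hxU⟩ := hcov ▸ mem_univ x
      exact mem_iUnion.2 ⟨g ⟨U, hU⟩, U, ⟨⟨U, hU⟩, mem_preimage.2 self_mem_Iic, rfl⟩, hxU⟩)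
  refine ⟨initialSegment b, hsub b, hb, ?_⟩
  calc #(initialSegment b) ≤ #(g ⁻¹' Iic b) := mk_image_le
    _ ≤ #(Iic b) := mk_preimage_of_injective _ _ g.injective
    _ < ν := by simpa using mk_Iic_lt b (by simp) (by simpa using hν)

theorem singular_weaklyInitiallyCompact_general
    {X : Type u} [TopologicalSpace X] (ν : Cardinal.{u})
    (hν : Cardinal.aleph0 ≤ ν)
    (hlt : ∀ lam < ν, WeaklyInitiallyCompact X lam)
    (hcf : KappaKappaCompact X ν.ord.cof) :
    WeaklyInitiallyCompact X ν := by
  intro 𝒰 hop hcov hcard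
  obtain ⟨𝒲, h𝒲𝒰, h𝒲cov, h𝒲card⟩ := hcf.exists_subcover_mk_lt hν hop hcov hcard
  obtain ⟨t, ht𝒲, htdense⟩ := hlt _ h𝒲card 𝒲 (fun U hU => hop U (h𝒲𝒰 hU)) h𝒲cov le_rfl
  exact ⟨t, ht𝒲.trans h𝒲𝒰, htdense⟩

theorem singular_weaklyInitiallyCompact
    {X : Type u} [TopologicalSpace X] (ν : Cardinal.{u})
    (hν : Cardinal.aleph0 ≤ ν) (hsing : ν.ord.cof < ν)
    (hlt : ∀ lam < ν, WeaklyInitiallyCompact X lam)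
    (hcf : KappaKappaCompact X ν.ord.cof) :
    WeaklyInitiallyCompact X ν :=
  singular_weaklyInitiallyCompact_general ν hν hlt hcf
end
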